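/- Let α ∈ ℝ, α ≠ 1, and set β = 2/(1−α). Let X be a compact topological space with a nonzero finite Borel measure λ, and let f, f̄ : X → (0,∞) be continuous with ∫_X f^{β} dλ = ∫_X f̄^{β} dλ and f ≠ f̄; set ξ = f̄ − f. Then the maximal solution τ : [0, T_max) → ℝ of the initial value problem τ''(t) = 2 · ( ∫_X (f + τ(t)ξ)^{β−1} ξ dλ / ∫_X (f + τ(t)ξ)^{β} dλ ) · τ'(t)², τ(0) = 0, τ'(0) = 1 (well-defined as long as f + τ(t)ξ > 0 on X) is strictly increasing, and there exists a finite time T ∈ (0, T_max) with τ(T) = 1. Consequently, via the projected-line formula γ(t,x) = (2/|1−α|)(f(x)+τ(t)ξ(x)) / (∫_X (f+τ(t)ξ)^{β} dλ)^{1/β}, any two points of the constraint surface S_α are joined by a geodesic of the radially projected connection; i.e. the space of probability densities is geodesically convex for the α-connection. -/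

import Mathlib

open MeasureTheory

/-- `IsProjSolution β lam f ξ τ τ' τ'' b` says that `τ` (with derivative data `τ'`, `τ''`)
is a solution on `[0, b)` (with `b ∈ (0,∞]` an extended real) of the initial value problem
`τ'' = 2 (∫ (f+τξ)^{β−1} ξ dλ / ∫ (f+τξ)^β dλ) (τ')²`, `τ(0) = 0`, `τ'(0) = 1`,
well-defined in the sense that `f + τ(t)ξ > 0` on the domain. -/
def IsProjSolution (β : ℝ) {X : Type*} [MeasurableSpace X] (lam : Measure X)
    (f ξ : X → ℝ) (τ τ' τ'' : ℝ → ℝ) (b : ENNReal) : Prop :=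
  τ 0 = 0 ∧ τ' 0 = 1 ∧
  (∀ t ∈ {s : ℝ | 0 ≤ s ∧ ENNReal.ofReal s < b},
    HasDerivWithinAt τ (τ' t) {s : ℝ | 0 ≤ s ∧ ENNReal.ofReal s < b} t) ∧
  (∀ t ∈ {s : ℝ | 0 ≤ s ∧ ENNReal.ofReal s < b},
    HasDerivWithinAt τ' (τ'' t) {s : ℝ | 0 ≤ s ∧ ENNReal.ofReal s < b} t) ∧
  ContinuousOn τ'' {s : ℝ | 0 ≤ s ∧ ENNReal.ofReal s < b} ∧
  (∀ t, 0 ≤ t → ENNReal.ofReal t < b → ∀ x : X, 0 < f x + τ t * ξ x) ∧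
  (∀ t, 0 ≤ t → ENNReal.ofReal t < b →
    τ'' t = 2 * ((∫ x, (f x + τ t * ξ x) ^ (β - 1 : ℝ) * ξ x ∂lam)
        / (∫ x, (f x + τ t * ξ x) ^ (β : ℝ) ∂lam)) * (τ' t) ^ 2)

/-!
Write `G` for the coefficient of the ODE, so that `τ'' = G(τ) τ'²`. Then `τ' exp (-∫₀^τ G)` has
derivative zero, so `τ' = exp (∫₀^τ G)`, hence `t = ∫₀^{τ(t)} exp (-∫₀^u G) du`: every solution is
the inverse of this strictly increasing "arrival time" function on the open interval
`D = {y | f + y ξ > 0}`, which contains `[0, 1]` since `f + y ξ = (1 - y) f + y f̄`. Conversely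
that inverse is a solution until it reaches any given `c ∈ D`; taking `c > 1`, maximality forces
the solution to live past the arrival time of `1`.
-/

open Set Filter Topology

theorem Set.OrdConnected.eq_of_hasDerivWithinAt_zero {S : Set ℝ} (hS : S.OrdConnected)
    {φ : ℝ → ℝ} (hφ : ∀ t ∈ S, HasDerivWithinAt φ 0 S t) {a t : ℝ} (ha : a ∈ S) (ht : t ∈ S)
    (hat : a ≤ t) : φ t = φ a := by
  have hsub : Icc a t ⊆ S := hS.out ha ht
  refine constant_of_has_deriv_right_zero
    (fun s hs => (hφ s (hsub hs)).continuousWithinAt.mono hsub) (fun s hs => ?_) t ⟨hat, le_rfl⟩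
  exact (hφ s (hsub (Ico_subset_Icc_self hs))).mono_of_mem_nhdsWithin
    (mem_of_superset (Icc_mem_nhdsGE hs.2) ((Icc_subset_Icc_left hs.1).trans hsub))

theorem hasDerivAt_intervalIntegral_of_continuousOn {g : ℝ → ℝ} {D : Set ℝ} (hD : IsOpen D)
    (hDc : D.OrdConnected) (hg : ContinuousOn g D) {a y : ℝ} (ha : a ∈ D) (hy : y ∈ D) :
    HasDerivAt (fun y => ∫ u in a..y, g u) (g y) y :=
  intervalIntegral.integral_hasDerivAt_right
    ((hg.mono (hDc.uIcc_subset ha hy)).intervalIntegrable)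
    (hg.stronglyMeasurableAtFilter hD y hy) (hg.continuousAt (hD.mem_nhds hy))

theorem exists_hasDerivAt_invFunOn_of_strictMonoOn {K k : ℝ → ℝ} {a c : ℝ} (hac : a ≤ c)
    (hK : ∀ y ∈ Icc a c, HasDerivAt K (k y) y) (hk : ∀ y ∈ Icc a c, k y ≠ 0)
    (hmono : StrictMonoOn K (Icc a c)) :
    ∃ σ : ℝ → ℝ, ∀ t ∈ Ioo (K a) (K c),
      σ t ∈ Ioo a c ∧ K (σ t) = t ∧ HasDerivAt σ (k (σ t))⁻¹ t := by
  set σ := Function.invFunOn K (Icc a c)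
  have hsurj : Icc (K a) (K c) ⊆ K '' Icc a c :=
    intermediate_value_Icc hac fun y hy => (hK y hy).continuousAt.continuousWithinAt
  have hσ : ∀ t ∈ Icc (K a) (K c), σ t ∈ Icc a c ∧ K (σ t) = t := fun t ht =>
    ⟨Function.invFunOn_mem (hsurj ht), Function.invFunOn_eq (hsurj ht)⟩
  have hσmono : StrictMonoOn σ (Icc (K a) (K c)) := fun s hs t ht hst => by
    rwa [← hmono.lt_iff_lt (hσ s hs).1 (hσ t ht).1, (hσ s hs).2, (hσ t ht).2]
  have himage : Icc a c ⊆ σ '' Icc (K a) (K c) := fun y hy =>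
    ⟨K y, ⟨hmono.monotoneOn ⟨le_rfl, hac⟩ hy hy.1, hmono.monotoneOn hy ⟨hac, le_rfl⟩ hy.2⟩,
      hmono.injOn.leftInvOn_invFunOn hy⟩
  refine ⟨σ, fun t ht => ?_⟩
  obtain ⟨hmem, heq⟩ := hσ t (Ioo_subset_Icc_self ht)
  have hσt : σ t ∈ Ioo a c :=
    ⟨hmem.1.lt_of_ne fun h => ht.1.ne' (by rw [← heq, ← h]),
      hmem.2.lt_of_ne fun h => ht.2.ne (by rw [← heq, h])⟩
  have hcont : ContinuousAt σ t := hσmono.continuousAt_of_image_mem_nhds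
    (Icc_mem_nhds ht.1 ht.2) (mem_of_superset (Icc_mem_nhds hσt.1 hσt.2) himage)
  refine ⟨hσt, heq, HasDerivAt.of_local_left_inverse hcont (hK _ hmem) (hk _ hmem) ?_⟩
  filter_upwards [Icc_mem_nhds ht.1 ht.2] with s hs using (hσ s hs).2

abbrev initialSegment (b : ENNReal) : Set ℝ := {s : ℝ | 0 ≤ s ∧ ENNReal.ofReal s < b}

theorem ordConnected_initialSegment (b : ENNReal) : (initialSegment b).OrdConnected :=
  ⟨fun _ hs _ ht _ hu => ⟨hs.1.trans hu.1, (ENNReal.ofReal_le_ofReal hu.2).trans_lt ht.2⟩⟩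

theorem zero_mem_initialSegment {b : ENNReal} {t : ℝ} (ht : t ∈ initialSegment b) :
    0 ∈ initialSegment b :=
  ⟨le_rfl, (ENNReal.ofReal_le_ofReal ht.1).trans_lt ht.2⟩

theorem initialSegment_ofReal (c : ℝ) :
    initialSegment (ENNReal.ofReal c) = Ico 0 c := by
  ext s
  simp only [mem_ofPred_eq, mem_Ico, and_congr_right_iff]
  exact fun hs => ENNReal.ofReal_lt_ofReal_iff_of_nonneg hs

structure IsQuadODESolution (G : ℝ → ℝ) (D : Set ℝ) (τ τ' τ'' : ℝ → ℝ) (b : ENNReal) :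
    Prop where
  apply_zero : τ 0 = 0
  deriv_zero : τ' 0 = 1
  hasDerivWithinAt : ∀ t ∈ initialSegment b, HasDerivWithinAt τ (τ' t) (initialSegment b) t
  hasDerivWithinAt_deriv :
    ∀ t ∈ initialSegment b, HasDerivWithinAt τ' (τ'' t) (initialSegment b) t
  continuousOn_deriv2 : ContinuousOn τ'' (initialSegment b)
  mem : ∀ t ∈ initialSegment b, τ t ∈ D
  ode : ∀ t ∈ initialSegment b, τ'' t = G (τ t) * τ' t ^ 2

namespace IsQuadODESolution

/-- Along a solution of `τ'' = G(τ) τ'²`, the velocity is `τ' = speed G τ`, where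
`(log speed)' = G`; `arrival G y` is then the time at which the solution reaches `y`. -/
noncomputable def speed (G : ℝ → ℝ) (y : ℝ) : ℝ := Real.exp (∫ u in (0 : ℝ)..y, G u)

noncomputable def arrival (G : ℝ → ℝ) (y : ℝ) : ℝ := ∫ u in (0 : ℝ)..y, (speed G u)⁻¹

variable {G : ℝ → ℝ} {D : Set ℝ}

theorem speed_pos (y : ℝ) : 0 < speed G y := Real.exp_pos _

@[simp]
theorem speed_zero : speed G 0 = 1 := by simp [speed]

@[simp]
theorem arrival_zero : arrival G 0 = 0 := intervalIntegral.integral_same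

theorem hasDerivAt_speed (hD : IsOpen D) (hDc : D.OrdConnected) (hG : ContinuousOn G D)
    (h0 : (0 : ℝ) ∈ D) {y : ℝ} (hy : y ∈ D) : HasDerivAt (speed G) (speed G y * G y) y :=
  (hasDerivAt_intervalIntegral_of_continuousOn hD hDc hG h0 hy).exp

theorem continuousOn_speed (hD : IsOpen D) (hDc : D.OrdConnected) (hG : ContinuousOn G D)
    (h0 : (0 : ℝ) ∈ D) : ContinuousOn (speed G) D := fun _ hy =>
  (hasDerivAt_speed hD hDc hG h0 hy).continuousAt.continuousWithinAt

theorem hasDerivAt_arrival (hD : IsOpen D) (hDc : D.OrdConnected) (hG : ContinuousOn G D)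
    (h0 : (0 : ℝ) ∈ D) {y : ℝ} (hy : y ∈ D) : HasDerivAt (arrival G) (speed G y)⁻¹ y :=
  hasDerivAt_intervalIntegral_of_continuousOn hD hDc
    ((continuousOn_speed hD hDc hG h0).inv₀ fun z _ => (speed_pos z).ne') h0 hy

theorem strictMonoOn_arrival (hD : IsOpen D) (hDc : D.OrdConnected) (hG : ContinuousOn G D)
    (h0 : (0 : ℝ) ∈ D) : StrictMonoOn (arrival G) D := by
  refine strictMonoOn_of_deriv_pos hDc.convex
    (fun y hy => (hasDerivAt_arrival hD hDc hG h0 hy).continuousAt.continuousWithinAt)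
    fun y hy => ?_
  rw [hD.interior_eq] at hy
  rw [(hasDerivAt_arrival hD hDc hG h0 hy).deriv]
  exact inv_pos.2 (speed_pos y)

variable {τ τ' τ'' : ℝ → ℝ} {b : ENNReal}

theorem deriv_eq_speed (h : IsQuadODESolution G D τ τ' τ'' b) (hD : IsOpen D)
    (hDc : D.OrdConnected) (hG : ContinuousOn G D) (h0 : (0 : ℝ) ∈ D) :
    ∀ t ∈ initialSegment b, τ' t = speed G (τ t) := by
  have hφ : ∀ t ∈ initialSegment b, HasDerivWithinAt (fun s => τ' s * (speed G (τ s))⁻¹) 0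
      (initialSegment b) t := by
    intro t ht
    have hs := ((hasDerivAt_speed hD hDc hG h0 (h.mem t ht)).comp_hasDerivWithinAt t
      (h.hasDerivWithinAt t ht)).inv (speed_pos _).ne'
    refine ((h.hasDerivWithinAt_deriv t ht).mul hs).congr_deriv ?_
    have := (speed_pos (G := G) (τ t)).ne'
    simp only [h.ode t ht, Function.comp_apply, Pi.inv_apply]
    field_simp
    ring
  intro t ht
  have h1 := (ordConnected_initialSegment b).eq_of_hasDerivWithinAt_zero hφ
    (zero_mem_initialSegment ht) ht ht.1
  simp only [h.apply_zero, h.deriv_zero, speed_zero, inv_one, mul_one] at h1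
  exact (mul_inv_eq_one₀ (speed_pos _).ne').1 h1

theorem arrival_apply (h : IsQuadODESolution G D τ τ' τ'' b) (hD : IsOpen D)
    (hDc : D.OrdConnected) (hG : ContinuousOn G D) (h0 : (0 : ℝ) ∈ D) :
    ∀ t ∈ initialSegment b, arrival G (τ t) = t := by
  have hφ : ∀ t ∈ initialSegment b, HasDerivWithinAt (fun s => arrival G (τ s) - s) 0
      (initialSegment b) t := by
    intro t ht
    refine (((hasDerivAt_arrival hD hDc hG h0 (h.mem t ht)).comp_hasDerivWithinAt t
      (h.hasDerivWithinAt t ht)).sub (hasDerivWithinAt_id t _)).congr_deriv ?_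
    rw [h.deriv_eq_speed hD hDc hG h0 t ht, inv_mul_cancel₀ (speed_pos _).ne', sub_self]
  intro t ht
  have h1 := (ordConnected_initialSegment b).eq_of_hasDerivWithinAt_zero hφ
    (zero_mem_initialSegment ht) ht ht.1
  simpa [h.apply_zero, sub_eq_zero] using h1

theorem eq_of_mem_initialSegment (h₁ : IsQuadODESolution G D τ τ' τ'' b)
    {σ σ' σ'' : ℝ → ℝ} {b₂ : ENNReal}
    (h₂ : IsQuadODESolution G D σ σ' σ'' b₂) (hD : IsOpen D) (hDc : D.OrdConnected)
    (hG : ContinuousOn G D) (h0 : (0 : ℝ) ∈ D) {t : ℝ} (ht₁ : t ∈ initialSegment b)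
    (ht₂ : t ∈ initialSegment b₂) : σ t = τ t :=
  (strictMonoOn_arrival hD hDc hG h0).injOn (h₂.mem t ht₂) (h₁.mem t ht₁) <| by
    rw [h₁.arrival_apply hD hDc hG h0 t ht₁, h₂.arrival_apply hD hDc hG h0 t ht₂]

theorem strictMonoOn (h : IsQuadODESolution G D τ τ' τ'' b) (hD : IsOpen D)
    (hDc : D.OrdConnected) (hG : ContinuousOn G D) (h0 : (0 : ℝ) ∈ D) :
    StrictMonoOn τ (initialSegment b) := fun s hs t ht hst => by
  rwa [← (strictMonoOn_arrival hD hDc hG h0).lt_iff_lt (h.mem s hs) (h.mem t ht),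
    h.arrival_apply hD hDc hG h0 s hs, h.arrival_apply hD hDc hG h0 t ht]

/-- The inverse function of `arrival G` is a solution up to the time it reaches `c`. -/
theorem exists_ofReal_arrival (hD : IsOpen D) (hDc : D.OrdConnected) (hG : ContinuousOn G D)
    (h0 : (0 : ℝ) ∈ D) {c : ℝ} (hc : c ∈ D) (hc0 : 0 < c) :
    ∃ σ σ' σ'' : ℝ → ℝ, IsQuadODESolution G D σ σ' σ'' (ENNReal.ofReal (arrival G c)) := by
  obtain ⟨a, ha, haD⟩ : ∃ a < 0, a ∈ D := by
    obtain ⟨l, hl, hlD⟩ := exists_Ioc_subset_of_mem_nhds (hD.mem_nhds h0) ⟨-1, by norm_num⟩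
    exact ⟨l / 2, by linarith, hlD ⟨by linarith, by linarith⟩⟩
  have hIcc : Icc a c ⊆ D := hDc.out haD hc
  have hmono := strictMonoOn_arrival hD hDc hG h0
  obtain ⟨σ, hσ⟩ := exists_hasDerivAt_invFunOn_of_strictMonoOn (by linarith)
    (fun y hy => hasDerivAt_arrival hD hDc hG h0 (hIcc hy))
    (fun y _ => inv_ne_zero (speed_pos y).ne') (hmono.mono hIcc)
  have hseg : initialSegment (ENNReal.ofReal (arrival G c)) ⊆ Ioo (arrival G a) (arrival G c) := by
    rw [initialSegment_ofReal]
    refine Ico_subset_Ioo_left ?_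
    simpa using hmono haD h0 ha
  have hσD : ∀ t ∈ initialSegment (ENNReal.ofReal (arrival G c)), σ t ∈ D := fun t ht =>
    hIcc (Ioo_subset_Icc_self (hσ t (hseg ht)).1)
  have hσderiv : ∀ t ∈ initialSegment (ENNReal.ofReal (arrival G c)),
      HasDerivAt σ (speed G (σ t)) t := fun t ht => by
    simpa only [inv_inv] using (hσ t (hseg ht)).2.2
  have hσ0 : σ 0 = 0 := by
    have h0seg : (0 : ℝ) ∈ initialSegment (ENNReal.ofReal (arrival G c)) := by
      rw [initialSegment_ofReal]
      exact ⟨le_rfl, by simpa using hmono h0 hc hc0⟩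
    exact hmono.injOn (hσD 0 h0seg) h0 (by rw [(hσ 0 (hseg h0seg)).2.1, arrival_zero])
  refine ⟨σ, fun t => speed G (σ t), fun t => G (σ t) * speed G (σ t) ^ 2,
    { apply_zero := hσ0
      deriv_zero := by simp [hσ0]
      hasDerivWithinAt := fun t ht => (hσderiv t ht).hasDerivWithinAt
      hasDerivWithinAt_deriv := fun t ht => ?_
      continuousOn_deriv2 := ?_
      mem := hσD
      ode := fun t _ => rfl }⟩
  · refine (((hasDerivAt_speed hD hDc hG h0 (hσD t ht)).comp t
      (hσderiv t ht)).congr_deriv ?_).hasDerivWithinAt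
    ring
  · have hσcont : ContinuousOn σ (initialSegment (ENNReal.ofReal (arrival G c))) :=
      fun t ht => (hσderiv t ht).continuousAt.continuousWithinAt
    exact (hG.comp hσcont hσD).mul (((continuousOn_speed hD hDc hG h0).comp hσcont hσD).pow 2)

/-- If the solution stopped before reaching `y`, the inverse of `arrival G` would extend it. -/
theorem exists_eq_of_maximal (h : IsQuadODESolution G D τ τ' τ'' b) (hD : IsOpen D)
    (hDc : D.OrdConnected) (hG : ContinuousOn G D) (h0 : (0 : ℝ) ∈ D)
    (hmax : ∀ (σ σ' σ'' : ℝ → ℝ) (b₂ : ENNReal), IsQuadODESolution G D σ σ' σ'' b₂ →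
      (∀ t : ℝ, 0 ≤ t → ENNReal.ofReal t < b → σ t = τ t) → b₂ ≤ b)
    {y : ℝ} (hy : y ∈ D) (hy0 : 0 < y) :
    ∃ T : ℝ, 0 < T ∧ ENNReal.ofReal T < b ∧ τ T = y := by
  have hmono := strictMonoOn_arrival hD hDc hG h0
  obtain ⟨u, hyu, huD⟩ := exists_Ico_subset_of_mem_nhds (hD.mem_nhds hy) ⟨y + 1, by linarith⟩
  have hc : (y + u) / 2 ∈ D := huD ⟨by linarith, by linarith⟩
  have hlt : arrival G y < arrival G ((y + u) / 2) := hmono hy hc (by linarith)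
  have hpos : 0 < arrival G y := by simpa using hmono h0 hy hy0
  obtain ⟨σ, σ', σ'', hσ⟩ := exists_ofReal_arrival hD hDc hG h0 hc (by linarith)
  have hT : ENNReal.ofReal (arrival G y) < b := by
    by_contra! hle
    have hsub : initialSegment b ⊆ initialSegment (ENNReal.ofReal (arrival G ((y + u) / 2))) :=
      fun t ht => ⟨ht.1, ht.2.trans_le (hle.trans (ENNReal.ofReal_lt_ofReal_iff'.2
        ⟨hlt, hpos.trans hlt⟩).le)⟩
    have := (hmax σ σ' σ'' _ hσ fun t ht hb =>
      h.eq_of_mem_initialSegment hσ hD hDc hG h0 ⟨ht, hb⟩ (hsub ⟨ht, hb⟩)).trans hle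
    rw [ENNReal.ofReal_le_ofReal_iff hpos.le] at this
    linarith
  refine ⟨arrival G y, hpos, hT, hmono.injOn (h.mem _ ⟨hpos.le, hT⟩) hy ?_⟩
  exact h.arrival_apply hD hDc hG h0 _ ⟨hpos.le, hT⟩

end IsQuadODESolution

section Projection

variable {X : Type*}

def posDomain (f ξ : X → ℝ) : Set ℝ := {y | ∀ x, 0 < f x + y * ξ x}

noncomputable def projCoeff [MeasurableSpace X] (β : ℝ) (lam : Measure X) (f ξ : X → ℝ) (y : ℝ) :
    ℝ :=
  2 * ((∫ x, (f x + y * ξ x) ^ (β - 1 : ℝ) * ξ x ∂lam) / (∫ x, (f x + y * ξ x) ^ (β : ℝ) ∂lam))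

theorem isOpen_posDomain [TopologicalSpace X] [CompactSpace X] {f ξ : X → ℝ} (hf : Continuous f)
    (hξ : Continuous ξ) :
    IsOpen (posDomain f ξ) := by
  have hcompl : (posDomain f ξ)ᶜ = Prod.fst '' {p : ℝ × X | f p.2 + p.1 * ξ p.2 ≤ 0} := by
    ext y
    simp [posDomain]
  rw [← isClosed_compl_iff, hcompl]
  exact isClosedMap_fst_of_compactSpace _ (isClosed_le (by fun_prop) continuous_const)

theorem ordConnected_posDomain (f ξ : X → ℝ) : (posDomain f ξ).OrdConnected := by
  refine ⟨fun a ha c hc y hy x => ?_⟩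
  rcases le_total 0 (ξ x) with hξ | hξ
  · nlinarith [ha x, mul_le_mul_of_nonneg_right hy.1 hξ]
  · nlinarith [hc x, mul_le_mul_of_nonpos_right hy.2 hξ]

theorem Icc_subset_posDomain {f fbar : X → ℝ} (hfpos : ∀ x, 0 < f x)
    (hfbarpos : ∀ x, 0 < fbar x) : Icc 0 1 ⊆ posDomain f (fun x => fbar x - f x) :=
  (ordConnected_posDomain _ _).out (fun x => by simpa using hfpos x)
    (fun x => by simpa using hfbarpos x)

variable [TopologicalSpace X] [CompactSpace X] [MeasurableSpace X] [BorelSpace X]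
  {lam : Measure X} [IsFiniteMeasure lam] {f ξ : X → ℝ}

theorem continuousOn_integral_rpow_mul (hf : Continuous f) (hξ : Continuous ξ) (p : ℝ)
    {g : X → ℝ} (hg : Continuous g) :
    ContinuousOn (fun y => ∫ x, (f x + y * ξ x) ^ p * g x ∂lam) (posDomain f ξ) := by
  refine continuousOn_integral_of_compact_support isCompact_univ ?_
    fun _ _ _ hx => absurd (mem_univ _) hx
  exact ((ContinuousOn.rpow_const (by fun_prop) fun q hq => Or.inl (hq.1 q.2).ne').mul
    (by fun_prop))

theorem integral_rpow_pos (hlam : lam ≠ 0) (hf : Continuous f) (hξ : Continuous ξ) (p : ℝ)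
    {y : ℝ} (hy : y ∈ posDomain f ξ) : 0 < ∫ x, (f x + y * ξ x) ^ p ∂lam := by
  have hcont : Continuous fun x => (f x + y * ξ x) ^ p :=
    (by fun_prop : Continuous fun x => f x + y * ξ x).rpow_const fun x => Or.inl (hy x).ne'
  rw [integral_pos_iff_support_of_nonneg (fun x => (Real.rpow_pos_of_pos (hy x) p).le)
    (hcont.integrable_of_hasCompactSupport (HasCompactSupport.of_compactSpace _))]
  rw [Function.support_eq_univ fun x => (Real.rpow_pos_of_pos (hy x) p).ne']
  exact Measure.measure_univ_pos.2 hlam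

theorem continuousOn_projCoeff (hlam : lam ≠ 0) (hf : Continuous f) (hξ : Continuous ξ)
    (β : ℝ) : ContinuousOn (projCoeff β lam f ξ) (posDomain f ξ) := by
  have hI := continuousOn_integral_rpow_mul (lam := lam) hf hξ (β - 1) hξ
  have hF := continuousOn_integral_rpow_mul (lam := lam) hf hξ β continuous_const (g := 1)
  simp only [Pi.one_apply, mul_one] at hF
  exact continuousOn_const.mul
    (hI.div hF fun y hy => (integral_rpow_pos hlam hf hξ β hy).ne')

end Projection

theorem isProjSolution_iff {β : ℝ} {X : Type*} [MeasurableSpace X] {lam : Measure X}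
    {f ξ : X → ℝ} {τ τ' τ'' : ℝ → ℝ} {b : ENNReal} :
    IsProjSolution β lam f ξ τ τ' τ'' b ↔
      IsQuadODESolution (projCoeff β lam f ξ) (posDomain f ξ) τ τ' τ'' b :=
  ⟨fun ⟨h0, h1, h2, h3, h4, h5, h6⟩ =>
    ⟨h0, h1, h2, h3, h4, fun t ht => h5 t ht.1 ht.2, fun t ht => h6 t ht.1 ht.2⟩,
    fun h => ⟨h.apply_zero, h.deriv_zero, h.hasDerivWithinAt, h.hasDerivWithinAt_deriv,
      h.continuousOn_deriv2, fun t h0 hb => h.mem t ⟨h0, hb⟩, fun t h0 hb => h.ode t ⟨h0, hb⟩⟩⟩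

theorem stmt19_general (α : ℝ) {X : Type*} [TopologicalSpace X] [CompactSpace X]
    [MeasurableSpace X] [BorelSpace X]
    (lam : Measure X) [IsFiniteMeasure lam] (hlam : lam ≠ 0)
    (f fbar : X → ℝ) (hf : Continuous f) (hfbar : Continuous fbar)
    (hfpos : ∀ x, 0 < f x) (hfbarpos : ∀ x, 0 < fbar x)
    (τ τ' τ'' : ℝ → ℝ) (b : ENNReal)
    (hsol : IsProjSolution (2 / (1 - α)) lam f (fun x => fbar x - f x) τ τ' τ'' b)
    (hmax : ∀ (σ σ' σ'' : ℝ → ℝ) (b₂ : ENNReal),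
      IsProjSolution (2 / (1 - α)) lam f (fun x => fbar x - f x) σ σ' σ'' b₂ →
      (∀ t : ℝ, 0 ≤ t → ENNReal.ofReal t < b → σ t = τ t) → b₂ ≤ b) :
    StrictMonoOn τ {s : ℝ | 0 ≤ s ∧ ENNReal.ofReal s < b} ∧
    ∃ T : ℝ, 0 < T ∧ ENNReal.ofReal T < b ∧ τ T = 1 := by
  have hξ : Continuous fun x => fbar x - f x := hfbar.sub hf
  have hD := isOpen_posDomain hf hξ
  have hDc := ordConnected_posDomain f fun x => fbar x - f x
  have hG := continuousOn_projCoeff hlam hf hξ (2 / (1 - α))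
  have h01 := Icc_subset_posDomain hfpos hfbarpos
  have h0 : (0 : ℝ) ∈ posDomain f fun x => fbar x - f x := h01 ⟨le_rfl, zero_le_one⟩
  simp only [isProjSolution_iff] at hsol hmax
  exact ⟨hsol.strictMonoOn hD hDc hG h0,
    hsol.exists_eq_of_maximal hD hDc hG h0 hmax (h01 ⟨zero_le_one, le_rfl⟩) one_pos⟩

/-- Geodesic convexity of the constraint surface `S_α` (`α ≠ 1`,
`β = 2/(1−α)`). Given continuous positive `f ≠ f̄` with `∫ f^β dλ = ∫ f̄^β dλ` and
`ξ = f̄ − f`, the maximal solution `τ` on `[0, T_max)` of the initial value problem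
`τ'' = 2 (∫ (f+τξ)^{β−1} ξ dλ / ∫ (f+τξ)^β dλ)(τ')²`, `τ(0)=0`, `τ'(0)=1` is strictly
increasing and reaches the value `1` in finite time `T < T_max`; consequently, via the
projected-line formula for geodesics, any two points of `S_α` are joined by a geodesic of
the radially projected connection, i.e. the space of probability densities is geodesically
convex for the α-connection. -/
theorem stmt19 (α : ℝ) (hα : α ≠ 1) {X : Type*} [TopologicalSpace X] [CompactSpace X]
    [MeasurableSpace X] [BorelSpace X]
    (lam : Measure X) [IsFiniteMeasure lam] (hlam : lam ≠ 0)
    (f fbar : X → ℝ) (hf : Continuous f) (hfbar : Continuous fbar)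
    (hfpos : ∀ x, 0 < f x) (hfbarpos : ∀ x, 0 < fbar x)
    (hnorm : ∫ x, f x ^ (2 / (1 - α) : ℝ) ∂lam = ∫ x, fbar x ^ (2 / (1 - α) : ℝ) ∂lam)
    (hne : f ≠ fbar)
    (τ τ' τ'' : ℝ → ℝ) (b : ENNReal) (hb : 0 < b)
    (hsol : IsProjSolution (2 / (1 - α)) lam f (fun x => fbar x - f x) τ τ' τ'' b)
    (hmax : ∀ (σ σ' σ'' : ℝ → ℝ) (b₂ : ENNReal),
      IsProjSolution (2 / (1 - α)) lam f (fun x => fbar x - f x) σ σ' σ'' b₂ →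
      (∀ t : ℝ, 0 ≤ t → ENNReal.ofReal t < b → σ t = τ t) → b₂ ≤ b) :
    StrictMonoOn τ {s : ℝ | 0 ≤ s ∧ ENNReal.ofReal s < b} ∧
    ∃ T : ℝ, 0 < T ∧ ENNReal.ofReal T < b ∧ τ T = 1 :=
  stmt19_general α lam hlam f fbar hf hfbar hfpos hfbarpos τ τ' τ'' b hsol hmax
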